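/- arXiv:2003.03953 — 2 statements merged into one kernel-verified Lean document; each statement's English description precedes it below -/
import Mathlib

section
/- Let S = k[x_1, …, x_n] be the polynomial ring in n variables over a field k and let f ∈ S be a nonzero non-unit polynomial. Then ir(S/fS) = 1 if and only if f = α · p^m for some nonzero α ∈ k, some positive integer m, and some irreducible polynomial p ∈ S. -/
/-- A submodule `N` of `M` is irreducible if it is proper and cannot be written as the
intersection of two submodules strictly containing it. -/
def IsIrredSubmodule (R M : Type*) [CommRing R] [AddCommGroup M] [Module R M]
    (N : Submodule R M) : Prop :=
  N ≠ ⊤ ∧ ∀ N₁ N₂ : Submodule R M, N₁ ⊓ N₂ = N → N₁ = N ∨ N₂ = N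

open Classical in
/-- The reducibility index `ir_R(M)`: the number of components in an irredundant
decomposition of the zero submodule of `M` as an intersection of irreducible submodules. -/
noncomputable def irIndex (R M : Type*) [CommRing R] [AddCommGroup M] [Module R M] : ℕ :=
  sInf {n | ∃ T : Finset (Submodule R M), T.card = n ∧ (∀ N ∈ T, IsIrredSubmodule R M N) ∧
    T.inf id = ⊥ ∧ ∀ N ∈ T, (T.erase N).inf id ≠ ⊥}

set_option synthInstance.maxHeartbeats 1000000


/-!
`ir = 1` says exactly that the zero submodule is irreducible, and by the correspondence theorem
the zero ideal of `S ⧸ (f)` is irreducible exactly when the ideal `(f)` of `S` is.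

If `q` is a prime factor of `f` and `f = qⁱ g` with `q ∤ g`, then `(f) = (qⁱ) ⊓ (g)`, so
irreducibility of `(f)` forces `g` to be a unit. Conversely, suppose `(pᵐ) = J₁ ⊓ J₂` with both
`Jᵢ` strictly larger. An element of `Jᵢ` outside `(pᵐ)` is `pʲ bᵢ` with `j < m` and `p ∤ bᵢ`,
so `p^(m-1) bᵢ ∈ Jᵢ`; then `p^(m-1) b₁ b₂ ∈ (pᵐ)`, i.e. `p ∣ b₁ b₂`, which is absurd.
-/

open Ideal

theorem isIrredSubmodule_iff_infIrred {R M : Type*} [CommRing R] [AddCommGroup M] [Module R M]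
    (N : Submodule R M) : IsIrredSubmodule R M N ↔ InfIrred N := by
  rw [IsIrredSubmodule, InfIrred, not_isMax_iff_ne_top]

theorem Nat.sInf_eq_one_iff {s : Set ℕ} : sInf s = 1 ↔ 1 ∈ s ∧ 0 ∉ s := by
  constructor
  · intro h
    have hs : s.Nonempty := Set.nonempty_iff_ne_empty.mpr fun he => by simp [he] at h
    exact ⟨h ▸ Nat.sInf_mem hs, fun h0 => by simp [Nat.sInf_eq_zero.mpr (Or.inl h0)] at h⟩
  · rintro ⟨h1, h0⟩
    refine le_antisymm (Nat.sInf_le h1) (Nat.one_le_iff_ne_zero.mpr ?_)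
    rw [Ne, Nat.sInf_eq_zero, not_or]
    exact ⟨h0, Set.nonempty_iff_ne_empty.mp ⟨1, h1⟩⟩

theorem irIndex_eq_one_iff (R M : Type*) [CommRing R] [AddCommGroup M] [Module R M] :
    irIndex R M = 1 ↔ InfIrred (⊥ : Submodule R M) := by
  classical
  rw [irIndex, Nat.sInf_eq_one_iff]
  simp only [Set.mem_ofPred_eq, Finset.card_eq_zero, Finset.card_eq_one,
    isIrredSubmodule_iff_infIrred]
  constructor
  · rintro ⟨⟨T, ⟨N, rfl⟩, hirr, hinf, -⟩, -⟩
    simp only [Finset.inf_singleton, id] at hinf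
    exact hinf ▸ hirr N (Finset.mem_singleton_self N)
  · intro h
    refine ⟨⟨{⊥}, ⟨⊥, rfl⟩, by simpa using h, by simp, by simpa using h.ne_top.symm⟩, ?_⟩
    rintro ⟨T, rfl, -, hinf, -⟩
    exact h.ne_top (by simpa using hinf.symm)

theorem Ideal.infIrred_comap_iff_of_surjective {R S : Type*} [CommRing R] [CommRing S]
    {f : R →+* S} (hf : Function.Surjective f) {J : Ideal S} :
    InfIrred (J.comap f) ↔ InfIrred J := by
  have hinj : Function.Injective (comap f) := comap_injective_of_surjective f hf
  simp only [InfIrred, not_isMax_iff_ne_top, Ne, comap_eq_top_iff]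
  refine and_congr_right fun _ => ⟨fun h J₁ J₂ hJ => ?_, fun h K₁ K₂ hK => ?_⟩
  · refine (h (b := J₁.comap f) (c := J₂.comap f) ?_).imp (fun h => hinj h) (fun h => hinj h)
    rw [← comap_inf, hJ]
  · have hcomap_map {K : Ideal R} (hK : J.comap f ≤ K) : (K.map f).comap f = K := by
      rw [comap_map_of_surjective f hf, sup_eq_left]
      exact (comap_mono bot_le).trans hK
    have h₁ := hcomap_map (hK ▸ inf_le_left)
    have h₂ := hcomap_map (hK ▸ inf_le_right)
    refine (h (b := K₁.map f) (c := K₂.map f) (hinj ?_)).imp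
      (fun h => h₁ ▸ congrArg (comap f) h) (fun h => h₂ ▸ congrArg (comap f) h)
    rw [comap_inf, h₁, h₂, hK]

theorem Ideal.Quotient.infIrred_bot_iff {R : Type*} [CommRing R] (I : Ideal R) :
    InfIrred (⊥ : Ideal (R ⧸ I)) ↔ InfIrred I := by
  rw [← infIrred_comap_iff_of_surjective Ideal.Quotient.mk_surjective, ← RingHom.ker_eq_comap_bot,
    mk_ker]

theorem exists_not_dvd_and_dvd_pow_pred_mul {M : Type*} [CommMonoid M] {p a : M} {m : ℕ}
    (h : ¬p ^ m ∣ a) : ∃ b, ¬p ∣ b ∧ a ∣ p ^ (m - 1) * b := by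
  have hm : m ≠ 0 := by rintro rfl; simp at h
  have hfin : FiniteMultiplicity p a := ⟨m - 1, by rwa [Nat.sub_add_cancel (by omega)]⟩
  obtain ⟨b, ha, hb⟩ := hfin.exists_eq_pow_mul_and_not_dvd
  have hlt : multiplicity p a < m := by
    by_contra! hle
    exact h ((pow_dvd_pow p hle).trans ⟨b, ha⟩)
  refine ⟨b, hb, ?_⟩
  rw [ha]
  exact mul_dvd_mul_right (pow_dvd_pow p (by omega)) b

section Domain

variable {R : Type*} [CommRing R] [IsDomain R]

theorem infIrred_span_prime_pow {p : R} (hp : Prime p) {m : ℕ} (hm : 0 < m) :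
    InfIrred (span {p ^ m}) := by
  refine ⟨by simpa [not_isMax_iff_ne_top, span_singleton_eq_top, hm.ne'] using hp.not_isUnit, ?_⟩
  intro J₁ J₂ hJ
  by_contra! hne
  have hgen {J : Ideal R} (hle : span {p ^ m} ≤ J) (hne : J ≠ span {p ^ m}) :
      ∃ b, ¬p ∣ b ∧ p ^ (m - 1) * b ∈ J := by
    obtain ⟨a, haJ, ha⟩ := SetLike.exists_of_lt (hle.lt_of_ne hne.symm)
    rw [mem_span_singleton] at ha
    obtain ⟨b, hb, hab⟩ := exists_not_dvd_and_dvd_pow_pred_mul ha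
    exact ⟨b, hb, J.mem_of_dvd hab haJ⟩
  obtain ⟨b₁, hb₁, hJ₁⟩ := hgen (hJ ▸ inf_le_left) hne.1
  obtain ⟨b₂, hb₂, hJ₂⟩ := hgen (hJ ▸ inf_le_right) hne.2
  have hmem : p ^ (m - 1) * (b₁ * b₂) ∈ span {p ^ m} := by
    rw [← hJ]
    exact ⟨mul_assoc (p ^ (m - 1)) b₁ b₂ ▸ J₁.mul_mem_right b₂ hJ₁,
      mul_left_comm b₁ (p ^ (m - 1)) b₂ ▸ J₂.mul_mem_left b₁ hJ₂⟩
  have hpm : p ^ m = p ^ (m - 1) * p := by rw [← pow_succ, Nat.sub_add_cancel hm]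
  rw [mem_span_singleton, hpm, mul_dvd_mul_iff_left (pow_ne_zero _ hp.ne_zero)] at hmem
  exact (hp.dvd_or_dvd hmem).elim hb₁ hb₂

theorem span_prime_pow_inf_span_of_not_dvd {p b : R} (hp : Prime p) (hb : ¬p ∣ b) (i : ℕ) :
    span {p ^ i} ⊓ span {b} = span {p ^ i * b} := by
  ext x
  simp only [Submodule.mem_inf, mem_span_singleton]
  refine ⟨fun ⟨hpx, c, hc⟩ => ?_,
    fun h => ⟨(dvd_mul_right _ _).trans h, (dvd_mul_left _ _).trans h⟩⟩
  obtain ⟨d, rfl⟩ := hp.pow_dvd_of_dvd_mul_left i hb (hc ▸ hpx)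
  exact ⟨d, by rw [hc]; ring⟩

theorem exists_prime_pow_associated_of_infIrred_span [UniqueFactorizationMonoid R] {f : R}
    (hf : f ≠ 0) (h : InfIrred (span {f})) :
    ∃ (p : R) (m : ℕ), Prime p ∧ 0 < m ∧ Associated (p ^ m) f := by
  have hfu : ¬IsUnit f := by simpa [span_singleton_eq_top] using h.ne_top
  obtain ⟨q, hqirr, hqf⟩ := WfDvdMonoid.exists_irreducible_factor hfu hf
  have hq : Prime q := hqirr.prime
  obtain ⟨g, hfg, hqg⟩ := (FiniteMultiplicity.of_prime_left hq hf).exists_eq_pow_mul_and_not_dvd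
  set i := multiplicity q f
  have hi : 0 < i := by
    refine Nat.pos_of_ne_zero fun hi => hqg ?_
    rwa [hfg, hi, pow_zero, one_mul] at hqf
  refine ⟨q, i, hq, hi, ?_⟩
  rcases h.2 (hfg ▸ span_prime_pow_inf_span_of_not_dvd hq hqg i) with hpow | hg
  · rwa [span_singleton_eq_span_singleton] at hpow
  · rw [span_singleton_eq_span_singleton, hfg, mul_comm] at hg
    have hqi : IsUnit (q ^ i) :=
      isUnit_of_associated_mul hg.symm (right_ne_zero_of_mul (hfg ▸ hf))
    exact absurd ((isUnit_pow_iff hi.ne').mp hqi) hq.not_isUnit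

end Domain

theorem irIndex_quotient_principal_eq_one_iff_general (k : Type*) [Field k] (n : ℕ)
    (f : MvPolynomial (Fin n) k) (hf0 : f ≠ 0) :
    irIndex (MvPolynomial (Fin n) k ⧸ Ideal.span {f})
        (MvPolynomial (Fin n) k ⧸ Ideal.span {f}) = 1 ↔
      ∃ (α : k) (m : ℕ) (p : MvPolynomial (Fin n) k),
        α ≠ 0 ∧ 0 < m ∧ Irreducible p ∧ f = MvPolynomial.C α * p ^ m := by
  rw [irIndex_eq_one_iff, Ideal.Quotient.infIrred_bot_iff]
  constructor
  · intro h
    obtain ⟨p, m, hp, hm, u, rfl⟩ := exists_prime_pow_associated_of_infIrred_span hf0 h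
    obtain ⟨α, hα, hu⟩ := MvPolynomial.isUnit_iff_eq_C_of_isReduced.mp u.isUnit
    exact ⟨α, m, p, hα.ne_zero, hm, hp.irreducible, by rw [hu, mul_comm]⟩
  · rintro ⟨α, m, p, hα, hm, hp, rfl⟩
    rw [span_singleton_mul_left_unit (hα.isUnit.map MvPolynomial.C)]
    exact infIrred_span_prime_pow hp.prime hm

/-- For the polynomial ring `S = k[x₁,…,xₙ]` over a field `k` and a nonzero non-unit
`f ∈ S`, `ir(S/fS) = 1` iff `f = α · pᵐ` with `α ∈ k` nonzero, `m ≥ 1` and `p` irreducible. -/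
theorem irIndex_quotient_principal_eq_one_iff (k : Type*) [Field k] (n : ℕ)
    (f : MvPolynomial (Fin n) k) (hf0 : f ≠ 0) (hfu : ¬IsUnit f) :
    irIndex (MvPolynomial (Fin n) k ⧸ Ideal.span {f})
        (MvPolynomial (Fin n) k ⧸ Ideal.span {f}) = 1 ↔
      ∃ (α : k) (m : ℕ) (p : MvPolynomial (Fin n) k),
        α ≠ 0 ∧ 0 < m ∧ Irreducible p ∧ f = MvPolynomial.C α * p ^ m :=
  irIndex_quotient_principal_eq_one_iff_general k n f hf0
end

section
/- Let (R, m) be a commutative Noetherian local ring with residue field k = R/m and let A be a nonzero Artinian R-module of finite length. Then ir'_R(A) = dim_k(A/mA). -/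
/-- A submodule `B` of `A` is sum-irreducible if it is nonzero and cannot be written as the
sum of two strictly smaller submodules. -/
def IsSumIrredSubmodule (R A : Type*) [CommRing R] [AddCommGroup A] [Module R A]
    (B : Submodule R A) : Prop :=
  B ≠ ⊥ ∧ ∀ C D : Submodule R A, C ⊔ D = B → C = B ∨ D = B

open Classical in
/-- The sum-reducibility index `ir'_R(A)`: the number of components in an irredundant
representation of `A` as a sum of sum-irreducible submodules. -/
noncomputable def coirIndex (R A : Type*) [CommRing R] [AddCommGroup A] [Module R A] : ℕ :=
  sInf {n | ∃ T : Finset (Submodule R A), T.card = n ∧ (∀ B ∈ T, IsSumIrredSubmodule R A B) ∧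
    T.sup id = ⊤ ∧ ∀ B ∈ T, (T.erase B).sup id ≠ ⊤}

/-!
Over a local ring `(R, 𝔪)`, a finitely generated sum-irreducible submodule is cyclic, since it is
the sum of the cyclic submodules spanned by its generators; conversely a nonzero cyclic submodule
`R ∙ x` is sum-irreducible, because each of its proper submodules lies in `𝔪 • (R ∙ x)` and
Nakayama's lemma forbids two of them from summing to `R ∙ x`. An irredundant representation of `A`
is therefore a generating family none of whose members can be dropped. By Nakayama's lemma a
family generates `A` iff its image spans `A/𝔪A` over `k`, so the images of such a family form a
`k`-basis of `A/𝔪A`.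
-/

open IsLocalRing Submodule

section General

variable {R A : Type*} [CommRing R] [AddCommGroup A] [Module R A]

theorem Submodule.span_image_eq_finset_sup {ι : Type*} (x : ι → A) (S : Finset ι) :
    span R (x '' S) = S.sup fun i => R ∙ x i := by
  rw [span_eq_iSup_of_singleton_spans, iSup_image, Finset.sup_eq_iSup]
  rfl

theorem Submodule.span_coe_finset_eq_sup (s : Finset A) : span R s = s.sup fun x => R ∙ x := by
  simpa using span_image_eq_finset_sup (R := R) id s

theorem isSumIrredSubmodule_iff_supIrred {B : Submodule R A} :
    IsSumIrredSubmodule R A B ↔ SupIrred B := by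
  rw [SupIrred, isMin_iff_eq_bot]
  rfl

theorem IsSumIrredSubmodule.exists_eq_span_singleton {B : Submodule R A}
    (h : IsSumIrredSubmodule R A B) (hB : B.FG) : ∃ x, B = R ∙ x := by
  obtain ⟨s, rfl⟩ := hB
  obtain ⟨x, -, hx⟩ :=
    (isSumIrredSubmodule_iff_supIrred.mp h).finset_sup_eq (span_coe_finset_eq_sup s).symm
  exact ⟨x, hx.symm⟩

end General

section LocalRing

variable {R A : Type*} [CommRing R] [IsLocalRing R] [AddCommGroup A] [Module R A]

local notation "𝔪" => maximalIdeal R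

local notation "k" => R ⧸ maximalIdeal R

theorem le_maximalIdeal_smul_of_lt_span_singleton {N : Submodule R A} {x : A} (h : N < R ∙ x) :
    N ≤ 𝔪 • (R ∙ x) := by
  intro c hc
  obtain ⟨r, rfl⟩ := mem_span_singleton.mp (h.le hc)
  refine smul_mem_smul (fun hr => h.not_ge ?_) (mem_span_singleton_self x)
  rw [span_singleton_le_iff_mem]
  exact (N.smul_mem_iff_of_isUnit hr).mp hc

theorem isSumIrredSubmodule_span_singleton {x : A} (hx : x ≠ 0) :
    IsSumIrredSubmodule R A (R ∙ x) := by
  refine ⟨by simpa using hx, fun C D hCD => ?_⟩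
  by_contra! hne
  have hC : C < R ∙ x := lt_of_le_of_ne (hCD ▸ le_sup_left) hne.1
  have hD : D < R ∙ x := lt_of_le_of_ne (hCD ▸ le_sup_right) hne.2
  have hle : R ∙ x ≤ 𝔪 • (R ∙ x) := calc
    R ∙ x = C ⊔ D := hCD.symm
    _ ≤ 𝔪 • (R ∙ x) := sup_le (le_maximalIdeal_smul_of_lt_span_singleton hC)
      (le_maximalIdeal_smul_of_lt_span_singleton hD)
  exact hx <| span_singleton_eq_bot.mp <| eq_bot_of_le_smul_of_le_jacobson_bot 𝔪 _
    (fg_span_singleton x) hle (maximalIdeal_le_jacobson ⊥)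

theorem span_image_mkQ_eq_top_iff [Module.Finite R A] {s : Set A} :
    span k ((𝔪 • ⊤ : Submodule R A).mkQ '' s) = ⊤ ↔ span R s = ⊤ := by
  rw [← restrictScalars_eq_top_iff R, restrictScalars_span R k Ideal.Quotient.mk_surjective,
    span_image, IsLocalRing.map_mkQ_eq_top]

theorem linearIndepOn_mkQ_of_irredundant {ι : Type*} [Module.Finite R A] {v : ι → A} {s : Set ι}
    (hs : span R (v '' s) = ⊤) (hirr : ∀ i ∈ s, span R (v '' (s \ {i})) ≠ ⊤) :
    LinearIndepOn k ((𝔪 • ⊤ : Submodule R A).mkQ ∘ v) s := by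
  let : Field k := Ideal.Quotient.field 𝔪
  rw [linearIndepOn_iff_notMem_span]
  intro i hi hmem
  apply hirr i hi
  rw [← span_image_mkQ_eq_top_iff, ← Set.image_comp, ← span_insert_eq_span hmem,
    ← Set.image_insert_eq, Set.insert_sdiff_singleton, Set.insert_eq_of_mem hi, Set.image_comp,
    span_image_mkQ_eq_top_iff, hs]

theorem finrank_quotient_eq_card_of_irredundant {ι : Type*} [Module.Finite R A] {v : ι → A}
    {s : Finset ι} (hs : span R (v '' s) = ⊤) (hirr : ∀ i ∈ s, span R (v '' (↑s \ {i})) ≠ ⊤) :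
    Module.finrank k (A ⧸ (𝔪 • ⊤ : Submodule R A)) = s.card := by
  have hli := linearIndepOn_mkQ_of_irredundant hs hirr
  have hspan :
      ⊤ ≤ span k (Set.range fun i : (s : Set ι) => ((𝔪 • ⊤ : Submodule R A).mkQ ∘ v) i) := by
    rw [← Set.image_eq_range, Set.image_comp, span_image_mkQ_eq_top_iff.mpr hs]
  rw [Module.finrank_eq_card_basis (Module.Basis.mk hli hspan)]
  simp

theorem card_eq_finrank_of_irredundant [IsNoetherian R A] [DecidableEq (Submodule R A)]
    {T : Finset (Submodule R A)} (hirr : ∀ B ∈ T, IsSumIrredSubmodule R A B)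
    (hsup : T.sup id = ⊤) (hred : ∀ B ∈ T, (T.erase B).sup id ≠ ⊤) :
    T.card = Module.finrank k (A ⧸ (𝔪 • ⊤ : Submodule R A)) := by
  choose! x hx using fun B hB => (hirr B hB).exists_eq_span_singleton (IsNoetherian.noetherian B)
  have hspan : ∀ S ⊆ T, span R (x '' S) = S.sup id := fun S hS => by
    rw [span_image_eq_finset_sup]
    exact Finset.sup_congr rfl fun B hB => (hx B (hS hB)).symm
  refine (finrank_quotient_eq_card_of_irredundant (v := x) ?_ fun B hB => ?_).symm
  · rw [hspan T le_rfl, hsup]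
  · rw [← Finset.coe_erase, hspan _ (Finset.erase_subset B T)]
    exact hred B hB

theorem exists_irredundant_sumIrred_decomposition [Module.Finite R A] [DecidableEq (Submodule R A)] :
    ∃ T : Finset (Submodule R A), (∀ B ∈ T, IsSumIrredSubmodule R A B) ∧ T.sup id = ⊤ ∧
      ∀ B ∈ T, (T.erase B).sup id ≠ ⊤ := by
  obtain ⟨s, hs⟩ := Module.Finite.fg_top (R := R) (M := A)
  let IsCyclicCover (T : Finset (Submodule R A)) : Prop :=
    (∀ B ∈ T, ∃ x, B = R ∙ x) ∧ T.sup id = ⊤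
  have hcover : IsCyclicCover (s.image fun x => R ∙ x) := by
    refine ⟨Finset.forall_mem_image.mpr fun x _ => ⟨x, rfl⟩, ?_⟩
    rw [Finset.sup_image, ← hs, span_coe_finset_eq_sup]
    rfl
  obtain ⟨T, ⟨hcyc, hsup⟩, hmin⟩ := exists_minimal_of_wellFoundedLT IsCyclicCover ⟨_, hcover⟩
  have hred : ∀ B ∈ T, (T.erase B).sup id ≠ ⊤ := fun B hB htop =>
    Finset.notMem_erase B T (hmin ⟨fun C hC => hcyc C (Finset.mem_of_mem_erase hC), htop⟩
      (Finset.erase_subset B T) hB)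
  refine ⟨T, fun B hB => ?_, hsup, hred⟩
  obtain ⟨x, rfl⟩ := hcyc B hB
  refine isSumIrredSubmodule_span_singleton fun hx => hred _ hB ?_
  rw [hx, span_zero_singleton, Finset.sup_erase_bot, hsup]

end LocalRing

theorem coirIndex_eq_finrank_quotient_general (R A : Type*) [CommRing R]
    [IsLocalRing R] [AddCommGroup A] [Module R A]
    (hfl : IsFiniteLength R A) :
    coirIndex R A =
      Module.finrank (R ⧸ IsLocalRing.maximalIdeal R)
        (A ⧸ (IsLocalRing.maximalIdeal R • ⊤ : Submodule R A)) := by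
  classical
  have : IsNoetherian R A := (isFiniteLength_iff_isNoetherian_isArtinian.mp hfl).1
  obtain ⟨T, hT⟩ := exists_irredundant_sumIrred_decomposition (R := R) (A := A)
  rw [coirIndex]
  apply le_antisymm
  · rw [← card_eq_finrank_of_irredundant hT.1 hT.2.1 hT.2.2]
    exact Nat.sInf_le ⟨T, rfl, hT⟩
  · refine le_csInf ⟨_, T, rfl, hT⟩ ?_
    rintro n ⟨T', rfl, hT'⟩
    exact (card_eq_finrank_of_irredundant hT'.1 hT'.2.1 hT'.2.2).ge

/-- For a Noetherian local ring `(R, m)` with residue field `k` and a nonzero Artinian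
`R`-module `A` of finite length, `ir'_R(A) = dim_k (A / mA)`. -/
theorem coirIndex_eq_finrank_quotient (R A : Type*) [CommRing R] [IsNoetherianRing R]
    [IsLocalRing R] [AddCommGroup A] [Module R A] [IsArtinian R A] [Nontrivial A]
    (hfl : IsFiniteLength R A) :
    coirIndex R A =
      Module.finrank (R ⧸ IsLocalRing.maximalIdeal R)
        (A ⧸ (IsLocalRing.maximalIdeal R • ⊤ : Submodule R A)) :=
  coirIndex_eq_finrank_quotient_general R A hfl
end
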